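/- Suppose nr = (q^m−1)/s for positive integers m and s with m ≥ 2, and suppose {l_i : i ∈ Z_{n,r}} = {1, m}. If N_1 ≥ 2 and N_m ≥ 1, then δ^{(1)}_{⌈N_1/2⌉+1} > δ^{(m)}_{⌈N_m/2⌉}. -/

import Mathlib

open scoped Classical

/-- The `q`-cyclotomic coset of `i` modulo `N`, with representatives taken in `{1, …, N}`. -/
noncomputable def cosetOf (q N i : ℕ) : Finset ℕ :=
  (Finset.Icc 1 N).filter (fun x => ∃ j : ℕ, x ≡ i * q ^ j [MOD N])

/-- `Z_{n,r} = {1 + i r : 0 ≤ i ≤ n-1}`. -/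
def Zset (n r : ℕ) : Finset ℕ := (Finset.range n).image (fun i => 1 + i * r)

/-- The collection of `q`-cyclotomic cosets contained in `Z_{n,r}`. -/
noncomputable def cosetsIn (q n r : ℕ) : Finset (Finset ℕ) :=
  (Zset n r).image (fun i => cosetOf q (n * r) i)

/-- `N_l`: the number of `q`-cyclotomic cosets of size `l` contained in `Z_{n,r}`. -/
noncomputable def Ncount (q n r l : ℕ) : ℕ :=
  ((cosetsIn q n r).filter (fun C => C.card = l)).card

/-- Coset leader: the smallest element of a coset. -/
noncomputable def leader (C : Finset ℕ) : ℕ := sInf (C : Set ℕ)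

/-- The sorted (increasing) list of coset leaders of the cosets of size `l` in `Z_{n,r}`. -/
noncomputable def leaderList (q n r l : ℕ) : List ℕ :=
  Finset.sort (((cosetsIn q n r).filter (fun C => C.card = l)).image leader) (· ≤ ·)

/-- `δ_i^{(l)}`: the `i`-th smallest coset leader (1-indexed). -/
noncomputable def delta (q n r l i : ℕ) : ℕ := (leaderList q n r l).getD (i - 1) 0

/-!
The singleton cosets in `Z_{n,r}` are the `q`-fixed residues `x ≡ 1 (mod r)`; they form an
arithmetic progression `u, u + d, …, u + (N₁ - 1) d` with `N₁ d = nr`. Put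
`D = u + ⌈N₁/2⌉ d = δ^{(1)}_{⌈N₁/2⌉+1}`, so that `nr + 2u ≤ 2D`. Since `2u` is fixed by `q` and
`2u ≡ 2 (mod r)`, the reflection `y ↦ nr + 2u - y` maps cyclotomic cosets to cyclotomic cosets
and preserves `Z_{n,r}`. A coset of size `m ≠ 1` with leader at least `D` lies above `D`, so its
reflection is a coset of size `m` lying below `nr + 2u - D ≤ D`. Hence at least half of the
`N_m` leaders of size `m` are smaller than `D`.
-/

open Finset

theorem Nat.dvd_mul_iff_div_gcd_dvd {N k x : ℕ} (hN : 0 < N) : N ∣ x * k ↔ N / N.gcd k ∣ x := by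
  constructor
  · intro h
    have hx : x * k ≡ 0 * k [MOD N] := by rwa [zero_mul, Nat.modEq_zero_iff_dvd]
    exact Nat.modEq_zero_iff_dvd.1 (hx.cancel_right_div_gcd hN)
  · intro h
    rw [← Nat.div_mul_cancel (Nat.gcd_dvd_left N k)]
    exact mul_dvd_mul h (Nat.gcd_dvd_right N k)

theorem Nat.coprime_of_modEq_one_of_dvd {r A u : ℕ} (hu : u ≡ 1 [MOD r]) (hA : A ∣ u) :
    r.Coprime A := by
  have h1 : u ≡ 1 [MOD r.gcd A] := hu.of_dvd (Nat.gcd_dvd_left r A)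
  have h0 : u ≡ 0 [MOD r.gcd A] := Nat.modEq_zero_iff_dvd.2 ((Nat.gcd_dvd_right r A).trans hA)
  exact Nat.dvd_one.1 (Nat.modEq_zero_iff_dvd.1 (h1.symm.trans h0))

theorem Nat.modEq_one_and_dvd_iff_modEq_mul {r A u x : ℕ} (hu : u ≡ 1 [MOD r]) (hA : A ∣ u) :
    x ≡ 1 [MOD r] ∧ A ∣ x ↔ x ≡ u [MOD r * A] := by
  have hu0 : u ≡ 0 [MOD A] := Nat.modEq_zero_iff_dvd.2 hA
  rw [← Nat.modEq_and_modEq_iff_modEq_mul (Nat.coprime_of_modEq_one_of_dvd hu hA),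
    ← Nat.modEq_zero_iff_dvd]
  exact and_congr ⟨fun h => h.trans hu.symm, fun h => h.trans hu⟩
    ⟨fun h => h.trans hu0.symm, fun h => h.trans hu0⟩

theorem Finset.sort_getD_eq_nth (s : Finset ℕ) (i : ℕ) :
    (s.sort (· ≤ ·)).getD i 0 = Nat.nth (· ∈ s) i := by
  have hs : (Set.ofPred (· ∈ s)).Finite := s.finite_toSet
  rw [Nat.nth_eq_getD_sort hs]
  congr
  ext
  simp

theorem Nat.count_mem_eq_card_filter_lt (s : Finset ℕ) (D : ℕ) :
    Nat.count (· ∈ s) D = #{x ∈ s | x < D} := by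
  rw [Nat.count_eq_card_filter_range]
  congr 1
  ext x
  simp [and_comm]

theorem Finset.filter_Icc_modEq_eq_image {N d u : ℕ} (hd : d ∣ N) (hu : u ∈ Icc 1 d) :
    {x ∈ Icc 1 N | x ≡ u [MOD d]} = (range (N / d)).image (fun j => u + j * d) := by
  rw [mem_Icc] at hu
  obtain ⟨Q, rfl⟩ := hd
  rw [Nat.mul_div_cancel_left Q (by omega)]
  ext x
  simp only [mem_filter, mem_Icc, mem_image, mem_range]
  constructor
  · rintro ⟨⟨hx1, hxN⟩, hxu⟩
    have hux : u ≤ x := by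
      by_contra! hxu'
      have := Nat.le_of_dvd (by omega) ((Nat.modEq_iff_dvd' hxu'.le).1 hxu)
      omega
    obtain ⟨j, hj⟩ := (Nat.modEq_iff_dvd' hux).1 hxu.symm
    refine ⟨j, ?_, by rw [mul_comm]; omega⟩
    by_contra! hQj
    have := Nat.mul_le_mul_left d hQj
    omega
  · rintro ⟨j, hj, rfl⟩
    have : (j + 1) * d ≤ d * Q := by rw [mul_comm d Q]; exact Nat.mul_le_mul_right d hj
    rw [add_mul, one_mul] at this
    exact ⟨⟨by omega, by omega⟩, Nat.add_mul_mod_self_right u j d⟩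

theorem Finset.card_filter_lt_image_add_mul {u d c Q : ℕ} (hd : 0 < d) (hc : c ≤ Q) :
    #{x ∈ (range Q).image (fun j => u + j * d) | x < u + c * d} = c := by
  have hinj : Function.Injective (fun j => u + j * d) := fun a b h => by
    simpa [hd.ne'] using h
  rw [filter_image, card_image_of_injective _ hinj]
  convert card_range c using 2
  ext j
  simp only [mem_filter, mem_range, add_lt_add_iff_left, Nat.mul_lt_mul_right hd]
  omega

theorem mul_pow_eq_self_of_mul_eq_self {M : Type*} [Monoid M] {a b : M} (h : a * b = a) (j : ℕ) :
    a * b ^ j = a := by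
  induction j with
  | zero => simp
  | succ j ih => rw [pow_succ, ← mul_assoc, ih, h]

namespace ZMod

variable {N : ℕ}

theorem eq_of_mem_Icc_of_natCast_eq {a b : ℕ} (ha : a ∈ Icc 1 N) (hb : b ∈ Icc 1 N)
    (h : (a : ZMod N) = b) : a = b := by
  rw [mem_Icc] at ha hb
  rw [ZMod.natCast_eq_natCast_iff] at h
  have h' : a - 1 ≡ b - 1 [MOD N] :=
    Nat.ModEq.add_right_cancel' 1 (by rwa [Nat.sub_add_cancel ha.1, Nat.sub_add_cancel hb.1])
  have := h'.eq_of_lt_of_lt (by omega) (by omega)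
  omega

theorem exists_mem_Icc_natCast_eq (hN : 0 < N) (a : ZMod N) :
    ∃ y ∈ Icc 1 N, (y : ZMod N) = a := by
  have : NeZero N := ⟨hN.ne'⟩
  refine ⟨(a - 1).val + 1, ?_, by simp⟩
  have := ZMod.val_lt (a - 1)
  rw [mem_Icc]
  omega

theorem natCast_mul_eq_self_iff_dvd {q : ℕ} (hN : 0 < N) (hq : 1 ≤ q) {x : ℕ} :
    (x : ZMod N) * q = x ↔ N / N.gcd (q - 1) ∣ x := by
  rw [← Nat.dvd_mul_iff_div_gcd_dvd hN, ← ZMod.natCast_eq_zero_iff, ← sub_eq_zero, ← mul_sub_one,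
    Nat.cast_mul, Nat.cast_sub hq, Nat.cast_one]

end ZMod

section Cosets

variable {q N : ℕ}

theorem mem_cosetOf {i x : ℕ} :
    x ∈ cosetOf q N i ↔ x ∈ Icc 1 N ∧ ∃ j, (x : ZMod N) = i * q ^ j := by
  simp only [cosetOf, mem_filter, ← ZMod.natCast_eq_natCast_iff, Nat.cast_mul, Nat.cast_pow]

theorem self_mem_cosetOf {i : ℕ} (hi : i ∈ Icc 1 N) : i ∈ cosetOf q N i :=
  mem_cosetOf.2 ⟨hi, 0, by simp⟩

theorem cosetOf_eq_of_mem (hqN : q.Coprime N) {i x : ℕ} (hx : x ∈ cosetOf q N i) :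
    cosetOf q N x = cosetOf q N i := by
  obtain ⟨hxN, a, hxa⟩ := mem_cosetOf.1 hx
  obtain ⟨k, hk⟩ : ∃ k, N.totient = k + 1 :=
    Nat.exists_eq_add_one.2 (Nat.totient_pos.2 (by rw [mem_Icc] at hxN; omega))
  have hφ : (q : ZMod N) ^ (k + 1) = 1 := by
    simpa [hk] using (ZMod.natCast_eq_natCast_iff _ _ _).2 (Nat.ModEq.pow_totient hqN)
  ext z
  simp only [mem_cosetOf]
  refine and_congr_right fun _ => ⟨fun ⟨b, hb⟩ => ⟨a + b, by rw [hb, hxa, pow_add, mul_assoc]⟩,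
    fun ⟨c, hc⟩ => ⟨k * a + c, ?_⟩⟩
  calc (z : ZMod N) = i * ((q : ZMod N) ^ (k + 1)) ^ a * q ^ c := by rw [hc, hφ, one_pow, mul_one]
    _ = x * q ^ (k * a + c) := by rw [hxa]; ring

theorem cosetOf_eq_singleton_iff {x : ℕ} (hx : x ∈ Icc 1 N) :
    cosetOf q N x = {x} ↔ (x : ZMod N) * q = x := by
  constructor
  · intro h
    obtain ⟨y, hy, hyx⟩ :=
      ZMod.exists_mem_Icc_natCast_eq (by rw [mem_Icc] at hx; omega) (x * q : ZMod N)
    have hyC : y ∈ cosetOf q N x := mem_cosetOf.2 ⟨hy, 1, by rw [hyx, pow_one]⟩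
    rw [h, mem_singleton] at hyC
    rw [← hyx, hyC]
  · intro h
    ext z
    rw [mem_cosetOf, mem_singleton]
    constructor
    · rintro ⟨hz, j, hj⟩
      exact ZMod.eq_of_mem_Icc_of_natCast_eq hz hx (hj.trans (mul_pow_eq_self_of_mul_eq_self h j))
    · rintro rfl
      exact ⟨hx, 0, by simp⟩

theorem cosetOf_sub_eq_image {v x : ℕ} (hv : (v : ZMod N) * q = v) (hx : x ∈ Icc 1 N)
    (hbound : ∀ y ∈ cosetOf q N x, y < v ∧ v ≤ y + N) :
    cosetOf q N (v - x) = (cosetOf q N x).image (v - ·) := by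
  have hN : 0 < N := by rw [mem_Icc] at hx; omega
  have hxv := (hbound x (self_mem_cosetOf hx)).1
  ext z
  simp only [mem_image, mem_cosetOf]
  constructor
  · rintro ⟨hz, j, hj⟩
    obtain ⟨y, hy, hyx⟩ := ZMod.exists_mem_Icc_natCast_eq hN (x * q ^ j : ZMod N)
    obtain ⟨hyv, hvy⟩ := hbound y (mem_cosetOf.2 ⟨hy, j, hyx⟩)
    refine ⟨y, ⟨hy, j, hyx⟩, ZMod.eq_of_mem_Icc_of_natCast_eq ?_ hz ?_⟩
    · rw [mem_Icc] at hy ⊢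
      omega
    · rw [Nat.cast_sub hyv.le, hj, Nat.cast_sub hxv.le, hyx, sub_mul,
        mul_pow_eq_self_of_mul_eq_self hv]
  · rintro ⟨y, ⟨hy, j, hj⟩, rfl⟩
    obtain ⟨hyv, hvy⟩ := hbound y (mem_cosetOf.2 ⟨hy, j, hj⟩)
    refine ⟨?_, j, ?_⟩
    · rw [mem_Icc] at hy ⊢
      omega
    · rw [Nat.cast_sub hyv.le, Nat.cast_sub hxv.le, hj, sub_mul,
        mul_pow_eq_self_of_mul_eq_self hv]

end Cosets

theorem leader_mem {C : Finset ℕ} (h : C.Nonempty) : leader C ∈ C :=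
  Nat.sInf_mem (s := (C : Set ℕ)) h

theorem leader_le {C : Finset ℕ} {y : ℕ} (h : y ∈ C) : leader C ≤ y :=
  Nat.sInf_le h

section Leaders

variable {q n r : ℕ}

theorem mem_Zset (hr : 0 < r) {x : ℕ} : x ∈ Zset n r ↔ x ∈ Icc 1 (n * r) ∧ x ≡ 1 [MOD r] := by
  simp only [Zset, mem_image, mem_range, mem_Icc]
  constructor
  · rintro ⟨i, hi, rfl⟩
    refine ⟨⟨by omega, ?_⟩, (Nat.modEq_iff_dvd' (by omega)).2 (by simp) |>.symm⟩
    nlinarith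
  · rintro ⟨⟨hx1, hxN⟩, hx⟩
    obtain ⟨i, hi⟩ := (Nat.modEq_iff_dvd' hx1).1 hx.symm
    refine ⟨i, ?_, by rw [mul_comm]; omega⟩
    by_contra! hni
    have := Nat.mul_le_mul_left r hni
    rw [mul_comm r n] at this
    omega

theorem cosetOf_subset_Zset (hr : 0 < r) (hqr : q ≡ 1 [MOD r]) {i : ℕ} (hi : i ∈ Zset n r) :
    cosetOf q (n * r) i ⊆ Zset n r := by
  intro x hx
  simp only [cosetOf, mem_filter] at hx
  obtain ⟨hxN, j, hxj⟩ := hx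
  rw [mem_Zset hr] at hi ⊢
  refine ⟨hxN, ?_⟩
  simpa using (hxj.of_dvd (dvd_mul_left r n)).trans (hi.2.mul (hqr.pow j))

theorem leader_cosetOf_mem (hr : 0 < r) {i : ℕ} (hi : i ∈ Zset n r) :
    leader (cosetOf q (n * r) i) ∈ cosetOf q (n * r) i :=
  leader_mem ⟨i, self_mem_cosetOf ((mem_Zset hr).1 hi).1⟩

noncomputable def leaders (q n r l : ℕ) : Finset ℕ :=
  ((cosetsIn q n r).filter (fun C => C.card = l)).image leader

theorem leader_cosetOf_mem_leaders {i : ℕ} (hi : i ∈ Zset n r) :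
    leader (cosetOf q (n * r) i) ∈ leaders q n r #(cosetOf q (n * r) i) :=
  mem_image.2 ⟨_, mem_filter.2 ⟨mem_image.2 ⟨i, hi, rfl⟩, rfl⟩, rfl⟩

theorem delta_eq_nth (l k : ℕ) : delta q n r l k = Nat.nth (· ∈ leaders q n r l) (k - 1) :=
  sort_getD_eq_nth _ _

theorem card_leaders (hr : 0 < r) (hqN : q.Coprime (n * r)) (l : ℕ) :
    #(leaders q n r l) = Ncount q n r l := by
  refine card_image_of_injOn fun C hC C' hC' hCC' => ?_
  obtain ⟨i, hi, rfl⟩ := mem_image.1 (mem_filter.1 (mem_coe.1 hC)).1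
  obtain ⟨i', hi', rfl⟩ := mem_image.1 (mem_filter.1 (mem_coe.1 hC')).1
  rw [← cosetOf_eq_of_mem hqN (leader_cosetOf_mem hr hi),
    ← cosetOf_eq_of_mem hqN (leader_cosetOf_mem hr hi'), hCC']

theorem mem_leaders (hr : 0 < r) (hqr : q ≡ 1 [MOD r]) (hqN : q.Coprime (n * r)) {l x : ℕ} :
    x ∈ leaders q n r l ↔
      x ∈ Zset n r ∧ #(cosetOf q (n * r) x) = l ∧ leader (cosetOf q (n * r) x) = x := by
  simp only [leaders, cosetsIn, mem_image, mem_filter]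
  constructor
  · rintro ⟨_, ⟨⟨i, hi, rfl⟩, hl⟩, rfl⟩
    have hmem := leader_cosetOf_mem (q := q) hr hi
    rw [cosetOf_eq_of_mem hqN hmem]
    exact ⟨cosetOf_subset_Zset hr hqr hi hmem, hl, rfl⟩
  · rintro ⟨hx, hl, hlead⟩
    exact ⟨_, ⟨⟨x, hx, rfl⟩, hl⟩, hlead⟩

theorem mem_leaders_one (hr : 0 < r) (hqr : q ≡ 1 [MOD r]) (hqN : q.Coprime (n * r)) {x : ℕ} :
    x ∈ leaders q n r 1 ↔ x ∈ Zset n r ∧ (x : ZMod (n * r)) * q = x := by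
  rw [mem_leaders hr hqr hqN]
  refine and_congr_right fun hx => ?_
  have hxN := ((mem_Zset hr).1 hx).1
  rw [← cosetOf_eq_singleton_iff hxN]
  constructor
  · rintro ⟨hcard, -⟩
    obtain ⟨a, ha⟩ := card_eq_one.1 hcard
    have hxa := self_mem_cosetOf (q := q) hxN
    rw [ha, mem_singleton] at hxa
    rwa [← hxa] at ha
  · intro h
    rw [h]
    exact ⟨card_singleton x, by simp [leader]⟩

theorem leaders_one_eq_filter_modEq (hr : 0 < r) (hq : 1 ≤ q) (hqr : q ≡ 1 [MOD r])
    (hqN : q.Coprime (n * r)) {u : ℕ} (hu : u ∈ leaders q n r 1) :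
    leaders q n r 1 = {x ∈ Icc 1 (n * r) | x ≡ u [MOD r * (n * r / (n * r).gcd (q - 1))]} := by
  obtain ⟨huZ, hufix⟩ := (mem_leaders_one hr hqr hqN).1 hu
  obtain ⟨huN, hu1⟩ := (mem_Zset hr).1 huZ
  have hN : 0 < n * r := by rw [mem_Icc] at huN; omega
  rw [ZMod.natCast_mul_eq_self_iff_dvd hN hq] at hufix
  ext x
  rw [mem_leaders_one hr hqr hqN, mem_filter, mem_Zset hr, ZMod.natCast_mul_eq_self_iff_dvd hN hq,
    and_assoc, Nat.modEq_one_and_dvd_iff_modEq_mul hu1 hufix]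

theorem exists_leaders_one_eq_image (hr : 0 < r) (hq : 1 ≤ q) (hqr : q ≡ 1 [MOD r])
    (hqN : q.Coprime (n * r)) (hne : (leaders q n r 1).Nonempty) :
    ∃ u d, 0 < d ∧ d ∣ n * r ∧
      leaders q n r 1 = (range (n * r / d)).image (fun j => u + j * d) := by
  set S := leaders q n r 1
  obtain ⟨u, hu, humin⟩ : ∃ u ∈ S, ∀ x ∈ S, u ≤ x :=
    ⟨S.min' hne, S.min'_mem hne, fun x hx => S.min'_le x hx⟩
  have hS : S = _ := leaders_one_eq_filter_modEq hr hq hqr hqN hu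
  set d := r * (n * r / (n * r).gcd (q - 1))
  obtain ⟨huZ, hufix⟩ := (mem_leaders_one hr hqr hqN).1 hu
  obtain ⟨huN, hu1⟩ := (mem_Zset hr).1 huZ
  rw [mem_Icc] at huN
  rw [ZMod.natCast_mul_eq_self_iff_dvd (by omega) hq] at hufix
  have hdN : d ∣ n * r := (Nat.coprime_of_modEq_one_of_dvd hu1 hufix).mul_dvd_of_dvd_of_dvd
    (dvd_mul_left r n) (Nat.div_dvd_of_dvd (Nat.gcd_dvd_left _ _))
  have hd : 0 < d := Nat.pos_of_dvd_of_pos hdN (by omega)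
  have hud : u ≤ d := not_lt.1 fun hdu => by
    have hmem : u - d ∈ S := by
      rw [hS, mem_filter, mem_Icc]
      refine ⟨⟨by omega, by omega⟩, (Nat.modEq_iff_dvd' (Nat.sub_le u d)).2 ?_⟩
      rw [Nat.sub_sub_self hdu.le]
    have := humin _ hmem
    omega
  exact ⟨u, d, hd, hdN, hS.trans (filter_Icc_modEq_eq_image hdN (mem_Icc.2 ⟨huN.1, hud⟩))⟩

theorem exists_mem_leaders_one_add_two_mul_le (hr : 0 < r) (hq : 1 ≤ q) (hqr : q ≡ 1 [MOD r])
    (hqN : q.Coprime (n * r)) (h2 : 2 ≤ #(leaders q n r 1)) :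
    ∃ u D, u ∈ leaders q n r 1 ∧ D ∈ leaders q n r 1 ∧
      Nat.count (· ∈ leaders q n r 1) D = (#(leaders q n r 1) + 1) / 2 ∧
      n * r + 2 * u ≤ 2 * D := by
  obtain ⟨u, d, hd, hdN, hS⟩ := exists_leaders_one_eq_image hr hq hqr hqN (card_pos.1 (by omega))
  set Q := n * r / d
  have hQ : #(leaders q n r 1) = Q := by
    rw [hS, card_image_of_injective _ fun a b h => by simpa [hd.ne'] using h, card_range]
  set c := (#(leaders q n r 1) + 1) / 2
  have hmem {j : ℕ} (hj : j < Q) : u + j * d ∈ leaders q n r 1 := by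
    rw [hS]
    exact mem_image.2 ⟨j, mem_range.2 hj, rfl⟩
  refine ⟨u, u + c * d, by simpa using hmem (j := 0) (by omega), hmem (by omega), ?_, ?_⟩
  · rw [Nat.count_mem_eq_card_filter_lt, hS]
    exact card_filter_lt_image_add_mul hd (by omega)
  · have hNQ : n * r = Q * d := (Nat.div_mul_cancel hdN).symm
    have : Q * d ≤ (2 * c) * d := Nat.mul_le_mul_right d (by omega)
    linarith

end Leaders

section Reflection

variable {q n r l v D : ℕ}

theorem reflect_of_mem_leaders (hr : 0 < r) (hqr : q ≡ 1 [MOD r]) (hqN : q.Coprime (n * r))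
    (hl : l ≠ 1) (hD : D ∈ leaders q n r 1) (hv : (v : ZMod (n * r)) * q = v)
    (hvr : v ≡ 2 [MOD r]) (hNv : n * r < v) (hvD : v ≤ 2 * D) {x : ℕ}
    (hx : x ∈ leaders q n r l) (hDx : D ≤ x) :
    v - x ∈ Zset n r ∧ (∀ y ∈ cosetOf q (n * r) x, D < y ∧ y < v) ∧
      cosetOf q (n * r) (v - x) = (cosetOf q (n * r) x).image (v - ·) := by
  obtain ⟨hxZ, hcard, hlead⟩ := (mem_leaders hr hqr hqN).1 hx
  obtain ⟨hDZ, hDfix⟩ := (mem_leaders_one hr hqr hqN).1 hD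
  have hxN := ((mem_Zset hr).1 hxZ).1
  have hDN := ((mem_Zset hr).1 hDZ).1
  rw [← cosetOf_eq_singleton_iff hDN] at hDfix
  have hC : ∀ y ∈ cosetOf q (n * r) x, D < y ∧ y < v := by
    intro y hy
    have hyN := (mem_cosetOf.1 hy).1
    rw [mem_Icc] at hyN
    refine ⟨lt_of_le_of_ne (hDx.trans (hlead ▸ leader_le hy)) ?_, by omega⟩
    rintro rfl
    apply hl
    rw [← hcard, ← cosetOf_eq_of_mem hqN hy, hDfix, card_singleton]
  have hxv := hC x (self_mem_cosetOf hxN)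
  rw [mem_Icc] at hxN hDN
  refine ⟨(mem_Zset hr).2 ⟨mem_Icc.2 ⟨by omega, by omega⟩, ?_⟩, hC, ?_⟩
  · refine Nat.ModEq.add_right_cancel' x ?_
    rw [Nat.sub_add_cancel hxv.2.le]
    exact hvr.trans (((mem_Zset hr).1 hxZ).2.add_left 1).symm
  · refine cosetOf_sub_eq_image hv (mem_Icc.2 hxN) fun y hy => ⟨(hC y hy).2, ?_⟩
    have := (hC y hy).1
    omega

theorem card_filter_le_le_card_filter_lt (hr : 0 < r) (hqr : q ≡ 1 [MOD r])
    (hqN : q.Coprime (n * r)) (hl : l ≠ 1) (hD : D ∈ leaders q n r 1)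
    (hv : (v : ZMod (n * r)) * q = v) (hvr : v ≡ 2 [MOD r]) (hNv : n * r < v)
    (hvD : v ≤ 2 * D) :
    #{x ∈ leaders q n r l | D ≤ x} ≤ #{x ∈ leaders q n r l | x < D} := by
  have reflect := fun x (hx : x ∈ leaders q n r l ∧ D ≤ x) =>
    reflect_of_mem_leaders hr hqr hqN hl hD hv hvr hNv hvD hx.1 hx.2
  have leader_eq {x} (hx : x ∈ leaders q n r l ∧ D ≤ x) :
      ∃ y ∈ cosetOf q (n * r) x, leader (cosetOf q (n * r) (v - x)) = v - y := by
    obtain ⟨hZ, -, himg⟩ := reflect x hx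
    simpa only [himg, mem_image, eq_comm] using leader_cosetOf_mem (q := q) hr hZ
  refine card_le_card_of_injOn (fun x => leader (cosetOf q (n * r) (v - x))) ?_ ?_
  · intro x hx
    rw [coe_filter, Set.mem_ofPred_eq] at hx
    obtain ⟨hZ, hC, himg⟩ := reflect x hx
    obtain ⟨y, hy, hyeq⟩ := leader_eq hx
    have hcard : #(cosetOf q (n * r) (v - x)) = l := by
      rw [himg, card_image_of_injOn fun y hy y' hy' h => by
        have := (hC y hy).2; have := (hC y' hy').2; omega]
      exact ((mem_leaders hr hqr hqN).1 hx.1).2.1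
    rw [coe_filter, Set.mem_ofPred_eq]
    refine ⟨hcard ▸ leader_cosetOf_mem_leaders hZ, ?_⟩
    have := (hC y hy).1
    simp only [hyeq]
    omega
  · intro x hx x' hx' hxx'
    rw [coe_filter, Set.mem_ofPred_eq] at hx hx'
    obtain ⟨y, hy, hyeq⟩ := leader_eq hx
    obtain ⟨y', hy', hyeq'⟩ := leader_eq hx'
    have hyy' : y = y' := by
      have := (reflect x hx).2.1 y hy
      have := (reflect x' hx').2.1 y' hy'
      simp only at hxx'
      omega
    rw [← ((mem_leaders hr hqr hqN).1 hx.1).2.2, ← ((mem_leaders hr hqr hqN).1 hx'.1).2.2,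
      ← cosetOf_eq_of_mem hqN hy, ← cosetOf_eq_of_mem hqN hy', hyy']

end Reflection

theorem stmt8_general (q n r m : ℕ) (hq : IsPrimePow q) (hco : Nat.Coprime n q)
    (hr : 0 < r) (hrdvd : r ∣ q - 1) (hm : 2 ≤ m)
    (hN1 : 2 ≤ Ncount q n r 1) (hNm : 1 ≤ Ncount q n r m) :
    delta q n r m ((Ncount q n r m + 1) / 2) <
      delta q n r 1 ((Ncount q n r 1 + 1) / 2 + 1) := by
  have hq1 : 1 ≤ q := hq.one_lt.le
  have hqr : q ≡ 1 [MOD r] := ((Nat.modEq_iff_dvd' hq1).2 hrdvd).symm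
  have hqN : q.Coprime (n * r) :=
    Nat.Coprime.mul_right hco.symm (by simpa [Nat.Coprime] using hqr.gcd_eq)
  simp only [← card_leaders hr hqN] at hN1 hNm ⊢
  obtain ⟨u, D, hu, hD, hcount, hND⟩ := exists_mem_leaders_one_add_two_mul_le hr hq1 hqr hqN hN1
  obtain ⟨huZ, hufix⟩ := (mem_leaders_one hr hqr hqN).1 hu
  obtain ⟨huN, hu1⟩ := (mem_Zset hr).1 huZ
  rw [mem_Icc] at huN
  have hv : ((n * r + 2 * u : ℕ) : ZMod (n * r)) * q = (n * r + 2 * u : ℕ) := by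
    rw [Nat.cast_add, ZMod.natCast_self, zero_add, Nat.cast_mul, mul_assoc, hufix]
  have hvr : n * r + 2 * u ≡ 2 [MOD r] := by
    simpa using (Nat.modEq_zero_iff_dvd.2 (dvd_mul_left r n)).add (hu1.mul_left 2)
  have hreflect :=
    card_filter_le_le_card_filter_lt hr hqr hqN (by omega : m ≠ 1) hD hv hvr (by omega) hND
  have hsplit := card_filter_add_card_filter_not (s := leaders q n r m) (p := (· < D))
  simp only [not_lt] at hsplit
  rw [delta_eq_nth, delta_eq_nth, Nat.add_sub_cancel, ← hcount, Nat.nth_count hD]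
  exact Nat.nth_lt_of_lt_count (by rw [Nat.count_mem_eq_card_filter_lt]; omega)

theorem stmt8 (q n r m s : ℕ) (hq : IsPrimePow q) (hn : 0 < n) (hco : Nat.Coprime n q)
    (hr : 0 < r) (hrdvd : r ∣ q - 1) (hm : 2 ≤ m) (hs : 0 < s)
    (hnrs : n * r * s = q ^ m - 1)
    (hset : (Zset n r).image (fun i => (cosetOf q (n * r) i).card) = {1, m})
    (hN1 : 2 ≤ Ncount q n r 1) (hNm : 1 ≤ Ncount q n r m) :
    delta q n r m ((Ncount q n r m + 1) / 2) <
      delta q n r 1 ((Ncount q n r 1 + 1) / 2 + 1) :=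
  stmt8_general q n r m hq hco hr hrdvd hm hN1 hNm
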